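/- Let Ω be a finite type equipped with a probability mass function P, let S be a finite type, let s : Ω → S and m : Ω → Bool be functions, and suppose that for every x ∈ S with P(s = x) > 0 both P(m = true ∧ s = x) > 0 and P(m = false ∧ s = x) > 0. Define D* : S → ℝ by D*(x) = P(m = true ∧ s = x)/P(s = x) when P(s = x) > 0 (and D*(x) = 1/2 otherwise), and for any D : S → ℝ with 0 < D(x) < 1 for all x define J(D) = ∑_{ω} P(ω)·( [m(ω)]·log D(s(ω)) + [¬m(ω)]·log(1 − D(s(ω))) ), where [·] is 1 on true and 0 on false. Then 0 < D*(x) < 1 for all x, and J(D) ≤ J(D*) for every such D, with equality if and only if D(x) = D*(x) for every x with P(s = x) > 0. -/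

import Mathlib

/-!
The objective splits over the values `x` of `s`: collecting the outcomes with `s ω = x`, the
contribution of `x` is `a log D(x) + b log (1 - D(x))` with `a = P(m ∧ s = x)` and
`b = P(¬m ∧ s = x)`. For `a, b > 0` this Bernoulli log-likelihood has the unique maximiser
`a / (a + b)` on `(0, 1)` (Gibbs' inequality, from `log t ≤ t - 1` with equality only at
`t = 1`), and for `a = b = 0` it vanishes identically.
-/

open Finset Real

noncomputable def bernoulliLogLik (a b p : ℝ) : ℝ := a * log p + b * log (1 - p)

lemma bernoulliLogLik_lt {a b p : ℝ} (ha : 0 < a) (hb : 0 < b) (hp0 : 0 < p) (hp1 : p < 1)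
    (hne : p ≠ a / (a + b)) :
    bernoulliLogLik a b p < bernoulliLogLik a b (a / (a + b)) := by
  have hab : 0 < a + b := by linarith
  set q := a / (a + b) with hq
  have hq0 : 0 < q := div_pos ha hab
  have hq1 : 1 - q = b / (a + b) := by rw [hq]; field_simp; ring
  have hq1_pos : 0 < 1 - q := hq1 ▸ div_pos hb hab
  have hp1_pos : 0 < 1 - p := by linarith
  have hA : a * (log p - log q) < a * (p / q - 1) := by
    rw [← log_div hp0.ne' hq0.ne']
    refine mul_lt_mul_of_pos_left (log_lt_sub_one_of_pos (div_pos hp0 hq0) ?_) ha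
    exact fun h => hne ((div_eq_one_iff_eq hq0.ne').mp h)
  have hB : b * (log (1 - p) - log (1 - q)) ≤ b * ((1 - p) / (1 - q) - 1) := by
    rw [← log_div hp1_pos.ne' hq1_pos.ne']
    exact mul_le_mul_of_nonneg_left (log_le_sub_one_of_pos (div_pos hp1_pos hq1_pos)) hb.le
  have hzero : a * (p / q - 1) + b * ((1 - p) / (1 - q) - 1) = 0 := by
    rw [hq1, hq]; field_simp; ring
  unfold bernoulliLogLik
  linarith

lemma bernoulliLogLik_le {a b p : ℝ} (ha : 0 < a) (hb : 0 < b) (hp0 : 0 < p) (hp1 : p < 1) :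
    bernoulliLogLik a b p ≤ bernoulliLogLik a b (a / (a + b)) := by
  rcases eq_or_ne p (a / (a + b)) with h | h
  · rw [h]
  · exact (bernoulliLogLik_lt ha hb hp0 hp1 h).le

lemma bernoulliLogLik_eq_iff {a b p : ℝ} (ha : 0 < a) (hb : 0 < b) (hp0 : 0 < p) (hp1 : p < 1) :
    bernoulliLogLik a b p = bernoulliLogLik a b (a / (a + b)) ↔ p = a / (a + b) := by
  refine ⟨fun heq => ?_, fun h => h ▸ rfl⟩
  by_contra hne
  exact (bernoulliLogLik_lt ha hb hp0 hp1 hne).ne heq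

@[simp]
lemma bernoulliLogLik_zero_zero (p : ℝ) : bernoulliLogLik 0 0 p = 0 := by
  simp [bernoulliLogLik]

lemma Finset.sum_le_sum_and_eq_iff {ι M : Type*} [Fintype ι] [AddCommMonoid M] [PartialOrder M]
    [IsOrderedCancelAddMonoid M] {f g : ι → M} {p : ι → Prop}
    (h : ∀ i, f i ≤ g i ∧ (f i = g i ↔ p i)) :
    ∑ i, f i ≤ ∑ i, g i ∧ (∑ i, f i = ∑ i, g i ↔ ∀ i, p i) := by
  rw [sum_eq_sum_iff_of_le fun i _ => (h i).1]
  exact ⟨sum_le_sum fun i _ => (h i).1, by simp only [mem_univ, true_imp_iff, (h _).2]⟩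

section Fibers

variable {Ω S : Type*} [Fintype Ω] [DecidableEq S]

lemma sum_mul_cond_eq_sum_bernoulliLogLik [Fintype S] (P : Ω → ℝ) (s : Ω → S) (m : Ω → Bool)
    (D : S → ℝ) :
    ∑ ω, P ω * (if m ω then log (D (s ω)) else log (1 - D (s ω))) =
      ∑ x, bernoulliLogLik (∑ ω, if m ω = true ∧ s ω = x then P ω else 0)
        (∑ ω, if m ω = false ∧ s ω = x then P ω else 0) (D x) := by
  simp only [bernoulliLogLik, sum_mul, ← sum_add_distrib]
  rw [sum_comm]
  refine sum_congr rfl fun ω _ => ?_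
  cases m ω <;> simp [sum_ite_eq]

lemma sum_ite_eq_add_sum_ite_bool (P : Ω → ℝ) (s : Ω → S) (m : Ω → Bool) (x : S) :
    (∑ ω, if s ω = x then P ω else 0) =
      (∑ ω, if m ω = true ∧ s ω = x then P ω else 0) +
        ∑ ω, if m ω = false ∧ s ω = x then P ω else 0 := by
  rw [← sum_add_distrib]
  refine sum_congr rfl fun ω _ => ?_
  cases m ω <;> simp

end Fibers

theorem usegan_optimal_discriminator_general {Ω S : Type*} [Fintype Ω] [Fintype S] [DecidableEq S]
    (P : Ω → ℝ) (hP0 : ∀ ω, 0 ≤ P ω)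
    (s : Ω → S) (m : Ω → Bool)
    (Ps : S → ℝ) (hPs : ∀ x, Ps x = ∑ ω, if s ω = x then P ω else 0)
    (Pts : S → ℝ) (hPts : ∀ x, Pts x = ∑ ω, if m ω = true ∧ s ω = x then P ω else 0)
    (hpos : ∀ x, 0 < Ps x →
      0 < Pts x ∧ 0 < ∑ ω, if m ω = false ∧ s ω = x then P ω else 0)
    (Dstar : S → ℝ)
    (hDstar_pos : ∀ x, 0 < Ps x → Dstar x = Pts x / Ps x)
    (hDstar_zero : ∀ x, ¬ 0 < Ps x → Dstar x = 1 / 2)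
    (J : (S → ℝ) → ℝ)
    (hJ : ∀ D : S → ℝ, J D = ∑ ω, P ω *
      (if m ω then Real.log (D (s ω)) else Real.log (1 - D (s ω)))) :
    (∀ x, 0 < Dstar x ∧ Dstar x < 1) ∧
    ∀ D : S → ℝ, (∀ x, 0 < D x ∧ D x < 1) →
      J D ≤ J Dstar ∧ (J D = J Dstar ↔ ∀ x, 0 < Ps x → D x = Dstar x) := by
  set Pfs : S → ℝ := fun x => ∑ ω, if m ω = false ∧ s ω = x then P ω else 0
  have hsplit (x : S) : Ps x = Pts x + Pfs x := by
    rw [hPs, hPts]; exact sum_ite_eq_add_sum_ite_bool P s m x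
  have hJ' (D : S → ℝ) : J D = ∑ x, bernoulliLogLik (Pts x) (Pfs x) (D x) := by
    simp only [hJ, hPts, Pfs]; exact sum_mul_cond_eq_sum_bernoulliLogLik P s m D
  have hDstar (x : S) (hx : 0 < Ps x) : Dstar x = Pts x / (Pts x + Pfs x) := by
    rw [hDstar_pos x hx, hsplit]
  have hnull (x : S) (hx : ¬ 0 < Ps x) : Pts x = 0 ∧ Pfs x = 0 := by
    have hnonneg : 0 ≤ Pts x ∧ 0 ≤ Pfs x := by
      rw [hPts]
      exact ⟨sum_nonneg fun ω _ => ite_nonneg (hP0 ω) le_rfl,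
        sum_nonneg fun ω _ => ite_nonneg (hP0 ω) le_rfl⟩
    have := hsplit x
    constructor <;> linarith
  refine ⟨fun x => ?_, fun D hD => ?_⟩
  · by_cases hx : 0 < Ps x
    · obtain ⟨ht, hf⟩ := hpos x hx
      rw [hDstar x hx, div_lt_one (by linarith)]
      exact ⟨by positivity, by linarith⟩
    · rw [hDstar_zero x hx]; norm_num
  have hterm (x : S) :
      bernoulliLogLik (Pts x) (Pfs x) (D x) ≤ bernoulliLogLik (Pts x) (Pfs x) (Dstar x) ∧
      (bernoulliLogLik (Pts x) (Pfs x) (D x) = bernoulliLogLik (Pts x) (Pfs x) (Dstar x) ↔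
        (0 < Ps x → D x = Dstar x)) := by
    by_cases hx : 0 < Ps x
    · obtain ⟨ht, hf⟩ := hpos x hx
      rw [hDstar x hx, bernoulliLogLik_eq_iff ht hf (hD x).1 (hD x).2]
      exact ⟨bernoulliLogLik_le ht hf (hD x).1 (hD x).2, (imp_iff_right hx).symm⟩
    · simp [hnull x hx, hx]
  rw [hJ', hJ']
  exact sum_le_sum_and_eq_iff hterm

/-- The unique optimal discriminator for the USEGAN objective on a finite probability
space is the conditional probability `D*(x) = P(m = true ∧ s = x) / P(s = x)`
(and `1/2` where `P(s = x) = 0`): it is valued in `(0,1)`, maximizes the objective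
`J(D) = ∑ ω, P ω · ([m ω]·log D(s ω) + [¬ m ω]·log (1 − D(s ω)))` over all discriminators
valued in `(0,1)`, and does so uniquely on the support of `s`. -/
theorem usegan_optimal_discriminator {Ω S : Type*} [Fintype Ω] [Fintype S] [DecidableEq S]
    (P : Ω → ℝ) (hP0 : ∀ ω, 0 ≤ P ω) (hP1 : ∑ ω, P ω = 1)
    (s : Ω → S) (m : Ω → Bool)
    (Ps : S → ℝ) (hPs : ∀ x, Ps x = ∑ ω, if s ω = x then P ω else 0)
    (Pts : S → ℝ) (hPts : ∀ x, Pts x = ∑ ω, if m ω = true ∧ s ω = x then P ω else 0)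
    (hpos : ∀ x, 0 < Ps x →
      0 < Pts x ∧ 0 < ∑ ω, if m ω = false ∧ s ω = x then P ω else 0)
    (Dstar : S → ℝ)
    (hDstar_pos : ∀ x, 0 < Ps x → Dstar x = Pts x / Ps x)
    (hDstar_zero : ∀ x, ¬ 0 < Ps x → Dstar x = 1 / 2)
    (J : (S → ℝ) → ℝ)
    (hJ : ∀ D : S → ℝ, J D = ∑ ω, P ω *
      (if m ω then Real.log (D (s ω)) else Real.log (1 - D (s ω)))) :
    (∀ x, 0 < Dstar x ∧ Dstar x < 1) ∧
    ∀ D : S → ℝ, (∀ x, 0 < D x ∧ D x < 1) →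
      J D ≤ J Dstar ∧ (J D = J Dstar ↔ ∀ x, 0 < Ps x → D x = Dstar x) :=
  usegan_optimal_discriminator_general P hP0 s m Ps hPs Pts hPts hpos Dstar hDstar_pos hDstar_zero J
    hJ
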